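/- Let H be a real n×n matrix with nonnegative off-diagonal entries and each column summing to zero. Then e^{tH} is a stochastic matrix for all t ≥ 0: its entries are nonnegative and each column sums to one. -/

import Mathlib

open NormedSpace

attribute [local instance] Matrix.linftyOpNormedRing Matrix.linftyOpNormedAlgebra

/-! Adding a large multiple `c` of the identity makes `tH + c` entrywise nonnegative; scalars
commute with everything, so `e^{tH} = e^{-c} e^{tH + c}`, and the exponential series of a
nonnegative matrix has nonnegative terms. For the column sums, the all-ones row annihilates `H`,
hence every positive power of `tH`, so it is fixed by `e^{tH}`. -/

theorem NormedSpace.mul_exp_eq_self_of_mul_eq_zero {𝕂 𝔸 : Type*} [RCLike 𝕂] [NormedRing 𝔸]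
    [NormedAlgebra 𝕂 𝔸] [CompleteSpace 𝔸] {a x : 𝔸} (h : a * x = 0) : a * exp x = a := by
  have hs := (exp_series_hasSum_exp' (𝕂 := 𝕂) x).mul_left a
  refine hs.unique ((hasSum_single 0 fun k hk => ?_).trans_eq (by simp))
  obtain ⟨k, rfl⟩ := Nat.exists_eq_succ_of_ne_zero hk
  rw [mul_smul_comm, pow_succ', ← mul_assoc, h, zero_mul, smul_zero]

namespace Matrix

variable {m : Type*} [Fintype m] [DecidableEq m]

theorem hasSum_exp_apply {𝕂 : Type*} [RCLike 𝕂] (A : Matrix m m 𝕂) (i j : m) :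
    HasSum (fun k : ℕ => (k.factorial⁻¹ : 𝕂) * (A ^ k) i j) (exp A i j) :=
  Pi.hasSum.mp (Pi.hasSum.mp (exp_series_hasSum_exp' (𝕂 := 𝕂) A) i) j

theorem exp_apply_nonneg {A : Matrix m m ℝ} (hA : ∀ i j, 0 ≤ A i j) (i j : m) :
    0 ≤ exp A i j :=
  (hasSum_exp_apply A i j).nonneg fun k => mul_nonneg (by positivity) (pow_apply_nonneg hA k i j)

theorem exp_apply_nonneg_of_offDiag_nonneg {M : Matrix m m ℝ}
    (hM : ∀ i j, i ≠ j → 0 ≤ M i j) (i j : m) : 0 ≤ exp M i j := by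
  obtain ⟨c, hc⟩ := (Set.finite_range fun i => -M i i).bddAbove
  set D := algebraMap ℝ (Matrix m m ℝ) c with hD
  have hshift : ∀ i j, 0 ≤ (M + D) i j := by
    intro i j
    rcases eq_or_ne i j with rfl | hij
    · have : -M i i ≤ c := hc ⟨i, rfl⟩
      simp only [D, add_apply, algebraMap_matrix_apply, if_true, Algebra.algebraMap_self,
        RingHom.id_apply]
      linarith
    · simpa [D, algebraMap_matrix_apply, hij] using hM i j hij
  have hexp : exp M = Real.exp (-c) • exp (M + D) :=
    calc exp M = exp (algebraMap ℝ _ (-c) + (M + D)) := by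
          rw [map_neg, ← hD, neg_add_eq_sub, add_sub_cancel_right]
      _ = exp (algebraMap ℝ _ (-c)) * exp (M + D) :=
        exp_add_of_commute _ _ (Algebra.commute_algebraMap_left _ _)
      _ = algebraMap ℝ _ (exp (-c)) * exp (M + D) :=
        congrArg (· * exp (M + D)) (algebraMap_exp_comm (-c)).symm
      _ = Real.exp (-c) • exp (M + D) := by rw [← Algebra.smul_def, Real.exp_eq_exp_ℝ]
  rw [hexp, smul_apply, smul_eq_mul]
  exact mul_nonneg (Real.exp_pos _).le (exp_apply_nonneg hshift i j)

theorem sum_exp_apply_eq_one {𝕂 : Type*} [RCLike 𝕂] {M : Matrix m m 𝕂}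
    (hM : ∀ j, ∑ i, M i j = 0) (j : m) : ∑ i, exp M i j = 1 := by
  have hJ : of (fun _ _ => (1 : 𝕂)) * M = 0 := by ext i j; simp [mul_apply, hM]
  have hJexp := mul_exp_eq_self_of_mul_eq_zero (𝕂 := 𝕂) hJ
  have hjj := congr_fun₂ hJexp j j
  simp only [mul_apply, of_apply, one_mul] at hjj
  exact hjj

end Matrix

/-- An infinitesimal stochastic matrix (nonnegative off-diagonal entries, columns summing
to zero) generates a stochastic semigroup: `e^{tH}` has nonnegative entries and each
column sums to one, for every `t ≥ 0`. -/
theorem exp_Qmatrix_stochastic {n : ℕ} (H : Matrix (Fin n) (Fin n) ℝ)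
    (hoff : ∀ i j, i ≠ j → 0 ≤ H i j) (hcol : ∀ j, ∑ i, H i j = 0) :
    ∀ t : ℝ, 0 ≤ t →
      (∀ i j, 0 ≤ exp (t • H) i j) ∧ (∀ j, ∑ i, exp (t • H) i j = 1) := by
  intro t ht
  refine ⟨Matrix.exp_apply_nonneg_of_offDiag_nonneg fun i j hij => ?_,
    Matrix.sum_exp_apply_eq_one fun j => ?_⟩
  · exact mul_nonneg ht (hoff i j hij)
  · simp [← Finset.mul_sum, hcol j]
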